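/- Let N be a positive integer and x : ℤ/Nℤ → {-1,1} with ∑_{i ∈ ℤ/Nℤ} x_i = 0, and let x̃ be the lift of x to ℤ. Then Σ_max(x̃) is finite, and moreover it is attained by an interval of length strictly less than N: there exist integers a ≤ b with b - a + 1 < N (or the empty interval) such that Σ_a^b(x̃) = Σ_max(x̃). -/

import Mathlib

/-!
Write `L = q N + r` with `0 ≤ r < N` for the length of an interval `[a, b]`. The first `q N`
terms of the lifted sequence form `q` complete periods, each summing to `∑ i, x i = 0`, so the
interval sum equals the sum over the last `r` terms: either `0` (when `r = 0`) or a sum over an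
interval shorter than `N`. Short interval sums are bounded by `∑ i, |x i|`, so the set of all
interval sums is bounded above; its supremum is attained, hence is `0` or a short interval sum.
-/

def intervalSums (N : ℕ) (x : ZMod N → ℤ) : Set ℤ :=
  {0} ∪ {s : ℤ | ∃ a b : ℤ, a ≤ b ∧ s = ∑ i ∈ Finset.Icc a b, x (i : ZMod N)}

open Finset

section
variable {M : Type*} [AddCommMonoid M] {N : ℕ} [NeZero N]

theorem Finset.sum_Ico_add_sum_Ico {α : Type*} [LinearOrder α] [LocallyFiniteOrder α]
    (f : α → M) {a b c : α} (hab : a ≤ b) (hbc : b ≤ c) :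
    ∑ i ∈ Ico a b, f i + ∑ i ∈ Ico b c, f i = ∑ i ∈ Ico a c, f i := by
  rw [← sum_union (Ico_disjoint_Ico_consecutive a b c), Ico_union_Ico_eq_Ico hab hbc]

theorem ZMod.sum_Ico_intCast (f : ZMod N → M) (a : ℤ) :
    ∑ i ∈ Ico a (a + N), f i = ∑ i, f i := by
  refine sum_nbij' (fun i : ℤ => (i : ZMod N)) (fun j => a + ((j - (a : ZMod N)).val : ℤ))
    (fun _ _ => mem_coe.2 (mem_univ _)) (fun j _ => ?_) (fun i hi => ?_) (fun j _ => ?_)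
    (fun _ _ => rfl)
  · have := ZMod.val_lt (j - (a : ZMod N))
    rw [mem_Ico]
    omega
  · rw [mem_Ico] at hi
    rw [← Int.cast_sub, ZMod.val_intCast, Int.emod_eq_of_lt (by omega) (by omega)]
    omega
  · simp

theorem ZMod.sum_Ico_add_mul_intCast (f : ZMod N → M) (a : ℤ) (k : ℕ) :
    ∑ i ∈ Ico a (a + k * N), f i = k • ∑ i, f i := by
  induction k with
  | zero => simp
  | succ k ih =>
    rw [Nat.cast_succ, add_one_mul, ← add_assoc,
      ← sum_Ico_add_sum_Ico _ (b := a + k * N) (le_add_of_nonneg_right (by positivity))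
        (by omega), ih, ZMod.sum_Ico_intCast, succ_nsmul]

theorem ZMod.sum_Icc_eq_zero_or_exists_short (f : ZMod N → M) (hf : ∑ i, f i = 0) {a b : ℤ}
    (hab : a ≤ b) :
    ∑ i ∈ Icc a b, f i = 0 ∨ ∃ a' b' : ℤ, a' ≤ b' ∧ b' - a' + 1 < N ∧
      ∑ i ∈ Icc a' b', f i = ∑ i ∈ Icc a b, f i := by
  have hN : (0 : ℤ) < N := by exact_mod_cast NeZero.pos N
  set r := (b + 1 - a) % N
  set k := ((b + 1 - a) / N).toNat
  have hr_lt : r < N := Int.emod_lt_of_pos _ hN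
  have hr_nonneg : 0 ≤ r := Int.emod_nonneg _ hN.ne'
  have hkN : 0 ≤ (k : ℤ) * N := by positivity
  have hc : a + (k : ℤ) * N = b + 1 - r := by
    rw [Int.toNat_of_nonneg (Int.ediv_nonneg (by omega) hN.le)]
    linarith [Int.mul_ediv_add_emod (b + 1 - a) N, mul_comm ((N : ℤ)) ((b + 1 - a) / N)]
  have hsplit : ∑ i ∈ Icc a b, f i = ∑ i ∈ Icc (b + 1 - r) b, f i := by
    rw [← Ico_add_one_right_eq_Icc, ← Ico_add_one_right_eq_Icc,
      ← sum_Ico_add_sum_Ico _ (by omega : a ≤ b + 1 - r) (by omega), ← hc,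
      ZMod.sum_Ico_add_mul_intCast, hf, smul_zero, zero_add]
  rcases hr_nonneg.eq_or_lt with hr0 | hr_pos
  · left
    rw [hsplit, ← hr0, Icc_eq_empty (by omega), sum_empty]
  · exact Or.inr ⟨b + 1 - r, b, by omega, by omega, hsplit.symm⟩

end

theorem ZMod.sum_Icc_le_sum_abs {α : Type*} [AddCommGroup α] [LinearOrder α]
    [IsOrderedAddMonoid α] {N : ℕ} [NeZero N] (x : ZMod N → α) {a b : ℤ} (h : b < a + N) :
    ∑ i ∈ Icc a b, x i ≤ ∑ i, |x i| :=
  calc ∑ i ∈ Icc a b, x i ≤ ∑ i ∈ Icc a b, |x i| := sum_le_sum fun i _ => le_abs_self _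
    _ ≤ ∑ i ∈ Ico a (a + N), |x i| :=
      sum_le_sum_of_subset_of_nonneg (fun i hi => by rw [mem_Icc] at hi; rw [mem_Ico]; omega)
        fun i _ _ => abs_nonneg _
    _ = ∑ i, |x i| := ZMod.sum_Ico_intCast (fun i => |x i|) a

section
variable {N : ℕ} [NeZero N] {x : ZMod N → ℤ}

theorem eq_zero_or_exists_short_of_mem_intervalSums (hsum : ∑ i, x i = 0) {s : ℤ}
    (hs : s ∈ intervalSums N x) :
    s = 0 ∨ ∃ a b : ℤ, a ≤ b ∧ b - a + 1 < N ∧ ∑ i ∈ Icc a b, x i = s := by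
  rcases hs with hs | ⟨a, b, hab, rfl⟩
  · exact Or.inl hs
  · exact ZMod.sum_Icc_eq_zero_or_exists_short x hsum hab

theorem bddAbove_intervalSums (hsum : ∑ i, x i = 0) : BddAbove (intervalSums N x) := by
  refine ⟨∑ i, |x i|, fun s hs => ?_⟩
  rcases eq_zero_or_exists_short_of_mem_intervalSums hsum hs with rfl | ⟨a, b, -, hlen, rfl⟩
  · exact sum_nonneg fun i _ => abs_nonneg _
  · exact ZMod.sum_Icc_le_sum_abs x (by omega)

end

theorem stmt_1_general (N : ℕ) [NeZero N] (x : ZMod N → ℤ)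
    (hsum : ∑ i, x i = 0) :
    BddAbove (intervalSums N x) ∧
      (sSup (intervalSums N x) = 0 ∨
        ∃ a b : ℤ, a ≤ b ∧ b - a + 1 < (N : ℤ) ∧
          (∑ i ∈ Finset.Icc a b, x (i : ZMod N)) = sSup (intervalSums N x)) := by
  have hbdd := bddAbove_intervalSums hsum
  exact ⟨hbdd, eq_zero_or_exists_short_of_mem_intervalSums hsum
    (Int.csSup_mem ⟨0, Or.inl rfl⟩ hbdd)⟩

theorem stmt_1 (N : ℕ) [NeZero N] (x : ZMod N → ℤ)
    (hx : ∀ i, x i = 1 ∨ x i = -1)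
    (hsum : ∑ i, x i = 0) :
    BddAbove (intervalSums N x) ∧
      (sSup (intervalSums N x) = 0 ∨
        ∃ a b : ℤ, a ≤ b ∧ b - a + 1 < (N : ℤ) ∧
          (∑ i ∈ Finset.Icc a b, x (i : ZMod N)) = sSup (intervalSums N x)) :=
  stmt_1_general N x hsum
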